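/- Assume (A1) and (A2), and let j* be the learner's action in the unique maximizing pure profile. Then the set M = { x ⊗ e_{j*} : x ∈ Δ_m } is a menu and is Pareto-optimal. -/

import Mathlib

/-!
A menu `M'` contained in `M = {x ⊗ e_{j*}}` must equal `M`, since the only product CSP of `M` with
optimizer marginal `x` is `x ⊗ e_{j*}`. Any other menu contains a CSP with mass off the column `j*`.
Against the optimizer who is paid `1` exactly off that column, every point of `M` is optimal, so
`V_L(M) = u_L(i*, j*)`, while the optimizer's favourite points of `M'` keep mass off the column, so
by (A1) they give the learner strictly less than `u_L(i*, j*)`.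
-/

open Finset

noncomputable section

/-- The product CSP `x ⊗ y`. -/
def prodCSP {m n : ℕ} (x : Fin m → ℝ) (y : Fin n → ℝ) : Fin m × Fin n → ℝ :=
  fun p => x p.1 * y p.2

/-- The `j`-th vertex `e_j` of a simplex. -/
def pureVec {k : ℕ} (j : Fin k) : Fin k → ℝ := fun j' => if j' = j then 1 else 0

/-- Linear extension of a payoff to CSPs. -/
def linCSP {m n : ℕ} (u : Fin m → Fin n → ℝ) (φ : Fin m × Fin n → ℝ) : ℝ :=
  ∑ p : Fin m × Fin n, φ p * u p.1 p.2

/-- Payoff the learner would get by always deviating to the pure action `j'`. -/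
def devCSP {m n : ℕ} (u : Fin m → Fin n → ℝ) (φ : Fin m × Fin n → ℝ) (j' : Fin n) : ℝ :=
  ∑ p : Fin m × Fin n, φ p * u p.1 j'

/-- Bilinear extension of a payoff to mixed strategies. -/
def mixPay {m n : ℕ} (u : Fin m → Fin n → ℝ) (x : Fin m → ℝ) (y : Fin n → ℝ) : ℝ :=
  ∑ i, ∑ j, x i * y j * u i j

/-- Pure best responses of the learner to the optimizer mixed strategy `x`. -/
def BRL {m n : ℕ} (u : Fin m → Fin n → ℝ) (x : Fin m → ℝ) : Set (Fin n) :=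
  {j | ∀ j' : Fin n, (∑ i, x i * u i j') ≤ ∑ i, x i * u i j}

/-- A CSP is no-regret. -/
def NoRegret {m n : ℕ} (u : Fin m → Fin n → ℝ) (φ : Fin m × Fin n → ℝ) : Prop :=
  ∀ j' : Fin n, devCSP u φ j' ≤ linCSP u φ

/-- A CSP is no-swap-regret. -/
def NoSwapRegret {m n : ℕ} (u : Fin m → Fin n → ℝ) (φ : Fin m × Fin n → ℝ) : Prop :=
  ∀ j j' : Fin n, (∑ i, φ (i, j) * u i j') ≤ ∑ i, φ (i, j) * u i j

/-- The no-regret menu: all no-regret CSPs. -/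
def MNR {m n : ℕ} (u : Fin m → Fin n → ℝ) : Set (Fin m × Fin n → ℝ) :=
  {φ | φ ∈ stdSimplex ℝ (Fin m × Fin n) ∧ NoRegret u φ}

/-- The no-swap-regret menu: all no-swap-regret CSPs. -/
def MNSR {m n : ℕ} (u : Fin m → Fin n → ℝ) : Set (Fin m × Fin n → ℝ) :=
  {φ | φ ∈ stdSimplex ℝ (Fin m × Fin n) ∧ NoSwapRegret u φ}

/-- A menu: a closed convex subset of the simplex of CSPs such that every optimizer
mixed strategy has some product response inside the set. -/
def IsMenu {m n : ℕ} (M : Set (Fin m × Fin n → ℝ)) : Prop :=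
  IsClosed M ∧ Convex ℝ M ∧ M ⊆ stdSimplex ℝ (Fin m × Fin n) ∧
    ∀ x ∈ stdSimplex ℝ (Fin m), ∃ y ∈ stdSimplex ℝ (Fin n), prodCSP x y ∈ M

/-- The learner's value when the optimizer with payoff `uO` picks their favorite point
of the menu `M`, breaking ties in the learner's favor. -/
def VL {m n : ℕ} (uL uO : Fin m → Fin n → ℝ) (M : Set (Fin m × Fin n → ℝ)) : ℝ :=
  sSup (linCSP uL '' {φ ∈ M | ∀ ψ ∈ M, linCSP uO ψ ≤ linCSP uO φ})

/-- `M'` Pareto-dominates `M` (for the learner payoff `uL`). -/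
def ParetoDominates {m n : ℕ} (uL : Fin m → Fin n → ℝ)
    (M' M : Set (Fin m × Fin n → ℝ)) : Prop :=
  (∀ uO : Fin m → Fin n → ℝ, VL uL uO M ≤ VL uL uO M') ∧
    ∃ uO : Fin m → Fin n → ℝ, VL uL uO M < VL uL uO M'

/-- A menu is Pareto-optimal if it is a menu and no menu Pareto-dominates it. -/
def ParetoOptimal {m n : ℕ} (uL : Fin m → Fin n → ℝ) (M : Set (Fin m × Fin n → ℝ)) : Prop :=
  IsMenu M ∧ ∀ M' : Set (Fin m × Fin n → ℝ), IsMenu M' → ¬ ParetoDominates uL M' M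

/-- (A2): no weakly dominated learner actions. -/
def A2cond {m n : ℕ} (u : Fin m → Fin n → ℝ) : Prop :=
  ∀ j : Fin n, (∃ x ∈ stdSimplex ℝ (Fin m), j ∈ BRL u x) →
    ∃ x' ∈ stdSimplex ℝ (Fin m), BRL u x' = {j}

/-- `U^-(M)`: the minimal learner utility over `M`. -/
def UminusVal {m n : ℕ} (u : Fin m → Fin n → ℝ) (M : Set (Fin m × Fin n → ℝ)) : ℝ :=
  sInf (linCSP u '' M)

/-- `U^+(M)`: the maximal learner utility over `M`. -/
def UplusVal {m n : ℕ} (u : Fin m → Fin n → ℝ) (M : Set (Fin m × Fin n → ℝ)) : ℝ :=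
  sSup (linCSP u '' M)

/-- `M^-`: the set of learner-utility-minimizing points of `M`. -/
def MminusSet {m n : ℕ} (u : Fin m → Fin n → ℝ) (M : Set (Fin m × Fin n → ℝ)) :
    Set (Fin m × Fin n → ℝ) :=
  {φ ∈ M | linCSP u φ = UminusVal u M}

/-- `M^+`: the set of learner-utility-maximizing points of `M`. -/
def MplusSet {m n : ℕ} (u : Fin m → Fin n → ℝ) (M : Set (Fin m × Fin n → ℝ)) :
    Set (Fin m × Fin n → ℝ) :=
  {φ ∈ M | linCSP u φ = UplusVal u M}

/-- The zero-sum value `U_ZS = min_x max_y u_L(x,y)`. -/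
def UZSval {m n : ℕ} (u : Fin m → Fin n → ℝ) : ℝ :=
  sInf ((fun x => sSup ((fun y => mixPay u x y) '' stdSimplex ℝ (Fin n))) ''
    stdSimplex ℝ (Fin m))

variable {m n : ℕ}

lemma pureVec_mem_stdSimplex {k : ℕ} (j : Fin k) : pureVec j ∈ stdSimplex ℝ (Fin k) := by
  convert single_mem_stdSimplex ℝ j using 1
  funext j'
  simp [pureVec, Pi.single_apply]

lemma sum_prodCSP_row (x : Fin m → ℝ) (y : Fin n → ℝ) (i : Fin m) :
    ∑ j, prodCSP x y (i, j) = x i * ∑ j, y j := by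
  simp [prodCSP, Finset.mul_sum]

lemma prodCSP_mem_stdSimplex {x : Fin m → ℝ} {y : Fin n → ℝ} (hx : x ∈ stdSimplex ℝ (Fin m))
    (hy : y ∈ stdSimplex ℝ (Fin n)) : prodCSP x y ∈ stdSimplex ℝ (Fin m × Fin n) := by
  refine ⟨fun p => mul_nonneg (hx.1 p.1) (hy.1 p.2), ?_⟩
  simp [Fintype.sum_prod_type, sum_prodCSP_row, hy.2, hx.2]

lemma linCSP_prodCSP_pureVec (u : Fin m → Fin n → ℝ) (x : Fin m → ℝ) (j : Fin n) :
    linCSP u (prodCSP x (pureVec j)) = ∑ i, x i * u i j := by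
  simp [linCSP, prodCSP, pureVec, Fintype.sum_prod_type, ite_mul]

lemma continuous_linCSP (u : Fin m → Fin n → ℝ) : Continuous (linCSP u) :=
  continuous_finsetSum _ fun p _ => (continuous_apply p).mul continuous_const

lemma linCSP_lt_of_pos {u : Fin m → Fin n → ℝ} {c : ℝ} {φ : Fin m × Fin n → ℝ}
    (hφ : φ ∈ stdSimplex ℝ (Fin m × Fin n)) (hu : ∀ p : Fin m × Fin n, u p.1 p.2 ≤ c)
    {p : Fin m × Fin n} (hup : u p.1 p.2 < c) (hφp : 0 < φ p) : linCSP u φ < c := by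
  have hgap : c - linCSP u φ = ∑ q, φ q * (c - u q.1 q.2) := by
    simp only [linCSP, mul_sub, Finset.sum_sub_distrib, ← Finset.sum_mul, hφ.2, one_mul]
  have hpos : 0 < ∑ q, φ q * (c - u q.1 q.2) :=
    Finset.sum_pos' (fun q _ => mul_nonneg (hφ.1 q) (sub_nonneg.2 (hu q)))
      ⟨p, Finset.mem_univ p, mul_pos hφp (sub_pos.2 hup)⟩
  linarith

lemma IsMenu.isCompact {M : Set (Fin m × Fin n → ℝ)} (hM : IsMenu M) : IsCompact M :=
  (isCompact_stdSimplex ℝ _).of_isClosed_subset hM.1 hM.2.2.1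

lemma IsMenu.nonempty {M : Set (Fin m × Fin n → ℝ)} (hM : IsMenu M) (i : Fin m) : M.Nonempty :=
  let ⟨_, _, hmem⟩ := hM.2.2.2 (pureVec i) (pureVec_mem_stdSimplex i)
  ⟨_, hmem⟩

lemma isCompact_setOf_isMaxOn {M : Set (Fin m × Fin n → ℝ)} (hM : IsCompact M)
    (uO : Fin m → Fin n → ℝ) :
    IsCompact {φ ∈ M | ∀ ψ ∈ M, linCSP uO ψ ≤ linCSP uO φ} := by
  have hclosed : IsClosed {φ | ∀ ψ ∈ M, linCSP uO ψ ≤ linCSP uO φ} := by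
    simp only [Set.ofPred_forall]
    exact isClosed_biInter fun ψ _ => isClosed_le continuous_const (continuous_linCSP uO)
  exact hM.inter_right hclosed

lemma le_VL {uL uO : Fin m → Fin n → ℝ} {M : Set (Fin m × Fin n → ℝ)} (hM : IsCompact M)
    {φ : Fin m × Fin n → ℝ} (hφM : φ ∈ M) (hφ : ∀ ψ ∈ M, linCSP uO ψ ≤ linCSP uO φ) :
    linCSP uL φ ≤ VL uL uO M :=
  le_csSup ((hM.image (continuous_linCSP uL)).bddAbove.mono (Set.image_mono fun _ h => h.1))
    ⟨φ, ⟨hφM, hφ⟩, rfl⟩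

lemma exists_VL_eq (uL uO : Fin m → Fin n → ℝ) {M : Set (Fin m × Fin n → ℝ)}
    (hM : IsCompact M) (hne : M.Nonempty) :
    ∃ φ ∈ M, (∀ ψ ∈ M, linCSP uO ψ ≤ linCSP uO φ) ∧ VL uL uO M = linCSP uL φ := by
  obtain ⟨φmax, hφmaxM, hφmax⟩ := hM.exists_isMaxOn hne (continuous_linCSP uO).continuousOn
  obtain ⟨φ, ⟨hφM, hφ⟩, hVL⟩ :=
    ((isCompact_setOf_isMaxOn hM uO).image (continuous_linCSP uL)).sSup_mem
      (Set.Nonempty.image _ ⟨φmax, hφmaxM, fun ψ hψ => hφmax hψ⟩)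
  exact ⟨φ, hφM, hφ, hVL.symm⟩

def alwaysPlay (m : ℕ) (j : Fin n) : Set (Fin m × Fin n → ℝ) :=
  {φ | ∃ x ∈ stdSimplex ℝ (Fin m), φ = prodCSP x (pureVec j)}

lemma isMenu_alwaysPlay (j : Fin n) : IsMenu (alwaysPlay m j) := by
  have himage : alwaysPlay m j = (fun x => prodCSP x (pureVec j)) '' stdSimplex ℝ (Fin m) := by
    ext φ
    exact ⟨fun ⟨x, hx, h⟩ => ⟨x, hx, h.symm⟩, fun ⟨x, hx, h⟩ => ⟨x, hx, h.symm⟩⟩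
  refine ⟨?_, ?_, ?_, fun x hx => ⟨pureVec j, pureVec_mem_stdSimplex j, x, hx, rfl⟩⟩
  · rw [himage]
    exact ((isCompact_stdSimplex ℝ _).image
      (continuous_pi fun p : Fin m × Fin n => (continuous_apply p.1).mul continuous_const)).isClosed
  · rintro _ ⟨x₁, hx₁, rfl⟩ _ ⟨x₂, hx₂, rfl⟩ a b ha hb hab
    refine ⟨a • x₁ + b • x₂, convex_stdSimplex ℝ _ hx₁ hx₂ ha hb hab, ?_⟩
    funext p
    simp only [prodCSP, Pi.add_apply, Pi.smul_apply, smul_eq_mul]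
    ring
  · rintro _ ⟨x, hx, rfl⟩
    exact prodCSP_mem_stdSimplex hx (pureVec_mem_stdSimplex j)

lemma exists_pos_off_column_of_notMem_alwaysPlay {j : Fin n} {φ : Fin m × Fin n → ℝ}
    (hφ : φ ∈ stdSimplex ℝ (Fin m × Fin n)) (hφj : φ ∉ alwaysPlay m j) :
    ∃ p : Fin m × Fin n, p.2 ≠ j ∧ 0 < φ p := by
  by_contra! hoff
  have hzero : ∀ p : Fin m × Fin n, p.2 ≠ j → φ p = 0 :=
    fun p hp => le_antisymm (hoff p hp) (hφ.1 p)
  have hrow : ∀ i, ∑ j', φ (i, j') = φ (i, j) := fun i =>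
    Finset.sum_eq_single j (fun j' _ hj' => hzero (i, j') hj') (by simp)
  refine hφj ⟨fun i => φ (i, j), ⟨fun i => hφ.1 (i, j), ?_⟩, ?_⟩
  · simpa [Fintype.sum_prod_type, hrow] using hφ.2
  · funext ⟨i, j'⟩
    by_cases h : j' = j
    · simp [prodCSP, pureVec, h]
    · simp [prodCSP, pureVec, h, hzero (i, j') h]

lemma prodCSP_eq_of_mem_alwaysPlay {j : Fin n} {x : Fin m → ℝ} {y : Fin n → ℝ}
    (hy : y ∈ stdSimplex ℝ (Fin n)) (hxy : prodCSP x y ∈ alwaysPlay m j) :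
    prodCSP x y = prodCSP x (pureVec j) := by
  obtain ⟨x', -, hEq⟩ := hxy
  have hx : x = x' := funext fun i => by
    simpa [sum_prodCSP_row, hy.2, (pureVec_mem_stdSimplex j).2] using
      congrArg (fun φ => ∑ j', φ (i, j')) hEq
  rw [hEq, hx]

lemma IsMenu.eq_alwaysPlay_of_subset {j : Fin n} {M : Set (Fin m × Fin n → ℝ)} (hM : IsMenu M)
    (hsub : M ⊆ alwaysPlay m j) : M = alwaysPlay m j := by
  refine hsub.antisymm ?_
  rintro _ ⟨x, hx, rfl⟩
  obtain ⟨y, hy, hxy⟩ := hM.2.2.2 x hx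
  rwa [← prodCSP_eq_of_mem_alwaysPlay hy (hsub hxy)]

lemma mem_alwaysPlay_of_le_linCSP {uL : Fin m → Fin n → ℝ} {istar : Fin m} {jstar : Fin n}
    (hA1 : ∀ p : Fin m × Fin n, p ≠ (istar, jstar) → uL p.1 p.2 < uL istar jstar)
    {φ : Fin m × Fin n → ℝ} (hφ : φ ∈ stdSimplex ℝ (Fin m × Fin n))
    (hle : uL istar jstar ≤ linCSP uL φ) : φ ∈ alwaysPlay m jstar := by
  by_contra hφj
  obtain ⟨p, hpj, hφp⟩ := exists_pos_off_column_of_notMem_alwaysPlay hφ hφj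
  have hne : p ≠ (istar, jstar) := fun h => hpj (by rw [h])
  have hmax : ∀ q : Fin m × Fin n, uL q.1 q.2 ≤ uL istar jstar := fun q => by
    by_cases hq : q = (istar, jstar)
    · rw [hq]
    · exact (hA1 q hq).le
  exact (linCSP_lt_of_pos hφ hmax (hA1 p hne) hφp).not_ge hle

def offColumnPayoff (m : ℕ) (j : Fin n) : Fin m → Fin n → ℝ :=
  fun _ j' => if j' = j then 0 else 1

lemma linCSP_offColumnPayoff_of_mem {j : Fin n} {φ : Fin m × Fin n → ℝ}
    (hφ : φ ∈ alwaysPlay m j) : linCSP (offColumnPayoff m j) φ = 0 := by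
  obtain ⟨x, -, rfl⟩ := hφ
  simp [linCSP_prodCSP_pureVec, offColumnPayoff]

lemma linCSP_offColumnPayoff_pos {j : Fin n} {φ : Fin m × Fin n → ℝ}
    (hφ : φ ∈ stdSimplex ℝ (Fin m × Fin n)) (hφj : φ ∉ alwaysPlay m j) :
    0 < linCSP (offColumnPayoff m j) φ := by
  obtain ⟨p, hpj, hφp⟩ := exists_pos_off_column_of_notMem_alwaysPlay hφ hφj
  refine Finset.sum_pos' (fun q _ => mul_nonneg (hφ.1 q) ?_) ⟨p, Finset.mem_univ p, ?_⟩
  · unfold offColumnPayoff; split_ifs <;> norm_num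
  · simpa [offColumnPayoff, hpj] using hφp

lemma VL_offColumnPayoff_lt {uL : Fin m → Fin n → ℝ} {istar : Fin m} {jstar : Fin n}
    (hA1 : ∀ p : Fin m × Fin n, p ≠ (istar, jstar) → uL p.1 p.2 < uL istar jstar)
    {M : Set (Fin m × Fin n → ℝ)} (hM : IsMenu M) (hsub : ¬ M ⊆ alwaysPlay m jstar) :
    VL uL (offColumnPayoff m jstar) M < VL uL (offColumnPayoff m jstar) (alwaysPlay m jstar) := by
  set uO := offColumnPayoff m jstar
  obtain ⟨ψ, hψM, hψ⟩ := Set.not_subset.1 hsub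
  obtain ⟨φ, hφM, hφ, hVL⟩ := exists_VL_eq uL uO hM.isCompact (hM.nonempty istar)
  have hφj : φ ∉ alwaysPlay m jstar := fun h => by
    have := hφ ψ hψM
    rw [linCSP_offColumnPayoff_of_mem h] at this
    exact this.not_gt (linCSP_offColumnPayoff_pos (hM.2.2.1 hψM) hψ)
  have hφlt : linCSP uL φ < uL istar jstar :=
    not_le.1 fun hle => hφj (mem_alwaysPlay_of_le_linCSP hA1 (hM.2.2.1 hφM) hle)
  have hstar : prodCSP (pureVec istar) (pureVec jstar) ∈ alwaysPlay m jstar :=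
    ⟨_, pureVec_mem_stdSimplex istar, rfl⟩
  calc VL uL uO M = linCSP uL φ := hVL
    _ < uL istar jstar := hφlt
    _ = linCSP uL (prodCSP (pureVec istar) (pureVec jstar)) := by
      simp [linCSP_prodCSP_pureVec, pureVec, ite_mul]
    _ ≤ VL uL uO (alwaysPlay m jstar) :=
      le_VL (isMenu_alwaysPlay jstar).isCompact hstar fun ψ' hψ' => by
        rw [linCSP_offColumnPayoff_of_mem hψ', linCSP_offColumnPayoff_of_mem hstar]

theorem always_play_jstar_menu_pareto_optimal_general
    (m n : ℕ)
    (uL : Fin m → Fin n → ℝ)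
    (istar : Fin m) (jstar : Fin n)
    (hA1 : ∀ p : Fin m × Fin n, p ≠ (istar, jstar) → uL p.1 p.2 < uL istar jstar) :
    IsMenu {φ : Fin m × Fin n → ℝ | ∃ x ∈ stdSimplex ℝ (Fin m), φ = prodCSP x (pureVec jstar)} ∧
      ParetoOptimal uL
        {φ : Fin m × Fin n → ℝ | ∃ x ∈ stdSimplex ℝ (Fin m), φ = prodCSP x (pureVec jstar)} := by
  change IsMenu (alwaysPlay m jstar) ∧ ParetoOptimal uL (alwaysPlay m jstar)
  refine ⟨isMenu_alwaysPlay jstar, isMenu_alwaysPlay jstar, ?_⟩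
  rintro M hM ⟨hweak, uO, hstrict⟩
  by_cases hsub : M ⊆ alwaysPlay m jstar
  · rw [hM.eq_alwaysPlay_of_subset hsub] at hstrict
    exact hstrict.false
  · exact (hweak _).not_gt (VL_offColumnPayoff_lt hA1 hM hsub)

/-- Assume (A1) and (A2). The menu `{ x ⊗ e_{j*} : x ∈ Δ_m }`, where `j*` is
the learner's action in the unique maximizing pure profile, is a menu and is
Pareto-optimal. -/
theorem always_play_jstar_menu_pareto_optimal
    (m n : ℕ) (hm : 0 < m) (hn : 0 < n)
    (uL : Fin m → Fin n → ℝ) (hbound : ∀ i j, uL i j ∈ Set.Icc (-1 : ℝ) 1)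
    (istar : Fin m) (jstar : Fin n)
    (hA1 : ∀ p : Fin m × Fin n, p ≠ (istar, jstar) → uL p.1 p.2 < uL istar jstar)
    (hA2 : A2cond uL) :
    IsMenu {φ : Fin m × Fin n → ℝ | ∃ x ∈ stdSimplex ℝ (Fin m), φ = prodCSP x (pureVec jstar)} ∧
      ParetoOptimal uL
        {φ : Fin m × Fin n → ℝ | ∃ x ∈ stdSimplex ℝ (Fin m), φ = prodCSP x (pureVec jstar)} :=
  always_play_jstar_menu_pareto_optimal_general m n uL istar jstar hA1
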